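/- Let X be a Banach space and f : X → ℝ be locally Lipschitz, lower semicontinuous and bounded below. For any sequence ε_n ↓ 0 there exists a sequence (g_n) in X with f(g_n) → inf f and, for every h ∈ X, f⁰(g_n, h) ≥ −ε_n·‖h‖·(1 + ‖g_n‖)^{-1}. -/

import Mathlib

open Filter

/-- The Clarke generalized directional derivative
`f⁰(x,v) = limsup_{y→x, λ↓0} (f(y+λv) − f(y))/λ`. -/
noncomputable def clarkeDeriv {X : Type*} [NormedAddCommGroup X] [NormedSpace ℝ X]
    (f : X → ℝ) (x v : X) : ℝ :=
  Filter.limsup (fun p : X × ℝ => (f (p.1 + p.2 • v) - f p.1) / p.2)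
    ((nhds x) ×ˢ (nhdsWithin 0 (Set.Ioi 0)))

/-!
Fix `n`. Pick `x₀` with `f x₀ ≤ inf f + min (1/(n+1)) (εₙ/2)` and apply Ekeland's variational
principle with slope `c = εₙ / (2 (1 + ‖x₀‖))`. The Ekeland point `g` satisfies
`f g ≤ f x + c ‖x - g‖` for all `x`, so every difference quotient of `f` at `g` is at least
`-c ‖h‖`, and hence so is `f⁰(g, h)`. Moreover `c ‖g - x₀‖ ≤ f x₀ - f g ≤ εₙ / 2` keeps `g`
within `1 + ‖x₀‖` of `x₀`, so `1 + ‖g‖ ≤ 2 (1 + ‖x₀‖)` and `c ≤ εₙ (1 + ‖g‖)⁻¹`.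
-/

open Set Metric Topology

section Ekeland

variable {Y : Type*} [MetricSpace Y] {f : Y → ℝ} {ε : ℝ}

/-- The points below `x` in the Brøndsted order of slope `ε`. -/
def ekelandSet (f : Y → ℝ) (ε : ℝ) (x : Y) : Set Y :=
  {y | f y + ε * dist y x ≤ f x}

theorem mem_ekelandSet {x y : Y} : y ∈ ekelandSet f ε x ↔ f y + ε * dist y x ≤ f x :=
  Iff.rfl

@[simp]
theorem mem_ekelandSet_self (x : Y) : x ∈ ekelandSet f ε x := by
  simp [mem_ekelandSet]

theorem ekelandSet_subset (hε : 0 ≤ ε) {x y : Y} (hy : y ∈ ekelandSet f ε x) :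
    ekelandSet f ε y ⊆ ekelandSet f ε x := fun z hz => by
  rw [mem_ekelandSet] at hy hz ⊢
  nlinarith [dist_triangle z y x]

theorem LowerSemicontinuous.isClosed_ekelandSet (hf : LowerSemicontinuous f) (x : Y) :
    IsClosed (ekelandSet f ε x) :=
  (hf.add (continuous_const.mul (continuous_id.dist continuous_const)).lowerSemicontinuous)
    |>.isClosed_preimage (f x)

theorem exists_mem_ekelandSet_forall_le_add (hf : BddBelow (range f)) (x : Y) {δ : ℝ}
    (hδ : 0 < δ) : ∃ y ∈ ekelandSet f ε x, ∀ z ∈ ekelandSet f ε x, f y ≤ f z + δ := by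
  have hne : (f '' ekelandSet f ε x).Nonempty := ⟨f x, x, mem_ekelandSet_self x, rfl⟩
  obtain ⟨_, ⟨y, hy, rfl⟩, hlt⟩ :=
    exists_lt_of_csInf_lt hne (lt_add_of_pos_right (sInf (f '' ekelandSet f ε x)) hδ)
  refine ⟨y, hy, fun z hz => ?_⟩
  have := csInf_le (hf.mono (image_subset_range f _)) (mem_image_of_mem f hz)
  linarith

theorem ekelandSet_subset_closedBall (hε : 0 < ε) {x : Y} {r : ℝ}
    (hx : ∀ z ∈ ekelandSet f ε x, f x ≤ f z + ε * r) : ekelandSet f ε x ⊆ closedBall x r :=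
  fun y hy => by
    have := hx y hy
    rw [mem_ekelandSet] at hy
    rw [mem_closedBall]
    nlinarith

end Ekeland

theorem Metric.exists_iInter_eq_singleton {Y : Type*} [MetricSpace Y] [CompleteSpace Y]
    {S : ℕ → Set Y} {u : ℕ → Y} {r : ℕ → ℝ} (hS : Antitone S) (hclosed : ∀ n, IsClosed (S n))
    (hu : ∀ n, u n ∈ S n) (hball : ∀ n, S n ⊆ closedBall (u n) (r n))
    (hr : Tendsto r atTop (𝓝 0)) : ∃ g, ⋂ n, S n = {g} := by
  have hdist : ∀ {y N}, y ∈ S N → dist y (u N) ≤ r N := fun hy => hball _ hy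
  have hcauchy : CauchySeq u := by
    refine cauchySeq_of_le_tendsto_0 (fun N => 2 * r N) (fun m k N hm hk => ?_)
      (by simpa using hr.const_mul 2)
    linarith [dist_triangle_right (u m) (u k) (u N), hdist (hS hm (hu m)),
      hdist (hS hk (hu k))]
  have tendsto_of_mem : ∀ y ∈ ⋂ n, S n, Tendsto u atTop (𝓝 y) := fun y hy => by
    rw [tendsto_iff_dist_tendsto_zero]
    refine squeeze_zero (fun _ => dist_nonneg) (fun n => ?_) hr
    rw [dist_comm]
    exact hdist (mem_iInter.1 hy n)
  obtain ⟨g, hg⟩ := cauchySeq_tendsto_of_complete hcauchy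
  have hgS : g ∈ ⋂ n, S n := mem_iInter.2 fun n =>
    (hclosed n).mem_of_tendsto hg (eventually_atTop.2 ⟨n, fun m hm => hS hm (hu m)⟩)
  exact ⟨g, eq_singleton_iff_unique_mem.2
    ⟨hgS, fun y hy => tendsto_nhds_unique (tendsto_of_mem y hy) hg⟩⟩

/-- Ekeland's variational principle. -/
theorem LowerSemicontinuous.exists_mem_ekelandSet_forall_le_add_mul_dist {Y : Type*}
    [MetricSpace Y] [CompleteSpace Y] {f : Y → ℝ} (hf : LowerSemicontinuous f)
    (hbdd : BddBelow (range f)) {ε : ℝ} (hε : 0 < ε) (x₀ : Y) :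
    ∃ g ∈ ekelandSet f ε x₀, ∀ x, f g ≤ f x + ε * dist x g := by
  choose! next hnext_mem hnext_min using fun (n : ℕ) (x : Y) =>
    exists_mem_ekelandSet_forall_le_add hbdd (ε := ε) x (δ := ε * (1 / (n + 1))) (by positivity)
  -- `u (n + 1)` minimizes `f` on `ekelandSet f ε (u n)` up to `ε / (n + 1)`, which confines
  -- the smaller set `ekelandSet f ε (u (n + 1))` to a ball of radius `1 / (n + 1)`.
  let u : ℕ → Y := fun n => Nat.rec x₀ next n
  have hu_mem : ∀ n, u (n + 1) ∈ ekelandSet f ε (u n) := fun n => hnext_mem n (u n)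
  let S : ℕ → Set Y := fun n => ekelandSet f ε (u (n + 1))
  have hS : Antitone S := antitone_nat_of_succ_le fun n => ekelandSet_subset hε.le (hu_mem _)
  have hball : ∀ n, S n ⊆ closedBall (u (n + 1)) (1 / (n + 1)) := fun n =>
    ekelandSet_subset_closedBall hε fun z hz =>
      hnext_min n (u n) z (ekelandSet_subset hε.le (hu_mem n) hz)
  obtain ⟨g, hg⟩ := exists_iInter_eq_singleton hS (fun n => hf.isClosed_ekelandSet _)
    (fun n => mem_ekelandSet_self _) hball tendsto_one_div_add_atTop_nhds_zero_nat
  have hgS : ∀ n, g ∈ S n := mem_iInter.1 (hg ▸ mem_singleton g)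
  refine ⟨g, ekelandSet_subset hε.le (hu_mem 0) (hgS 0), fun x => ?_⟩
  by_contra! hx
  -- `x` lies below `g`, hence in every `S n`, so `x = g`.
  have hxS : x ∈ ⋂ n, S n :=
    mem_iInter.2 fun n => ekelandSet_subset hε.le (hgS n) (mem_ekelandSet.2 hx.le)
  rw [hg, mem_singleton_iff] at hxS
  subst hxS
  simp at hx

section Clarke

variable {X : Type*} [NormedAddCommGroup X] [NormedSpace ℝ X] {f : X → ℝ}

theorem LocallyLipschitz.isBoundedUnder_le_slope (hf : LocallyLipschitz f) (x v : X) :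
    IsBoundedUnder (· ≤ ·) (𝓝 x ×ˢ 𝓝[>] 0)
      fun p : X × ℝ => (f (p.1 + p.2 • v) - f p.1) / p.2 := by
  obtain ⟨K, U, hU, hK⟩ := hf x
  have hmove : Tendsto (fun p : X × ℝ => p.1 + p.2 • v) (𝓝 x ×ˢ 𝓝[>] 0) (𝓝 x) := by
    have : Tendsto (fun p : X × ℝ => p.1 + p.2 • v) (𝓝 (x, 0)) (𝓝 (x + (0 : ℝ) • v)) :=
      (continuous_fst.add (continuous_snd.smul continuous_const)).tendsto _
    rw [zero_smul, add_zero, nhds_prod_eq] at this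
    exact this.mono_left (prod_mono le_rfl nhdsWithin_le_nhds)
  refine ⟨K * ‖v‖, eventually_map.2 ?_⟩
  filter_upwards [prod_mem_prod hU (self_mem_nhdsWithin (s := Ioi (0 : ℝ))),
    hmove.eventually hU]
    with p ⟨hp, (ht : 0 < p.2)⟩ hpv
  have hlip := hK.dist_le_mul _ hpv _ hp
  rw [Real.dist_eq, dist_eq_norm, add_sub_cancel_left, norm_smul, Real.norm_of_nonneg ht.le]
    at hlip
  rw [div_le_iff₀ ht]
  calc f (p.1 + p.2 • v) - f p.1 ≤ |f (p.1 + p.2 • v) - f p.1| := le_abs_self _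
    _ ≤ K * ‖v‖ * p.2 := by linarith

theorem LocallyLipschitz.le_clarkeDeriv (hf : LocallyLipschitz f) {x v : X} {a : ℝ}
    (h : ∀ t > 0, a ≤ (f (x + t • v) - f x) / t) : a ≤ clarkeDeriv f x v := by
  refine le_limsup_of_frequently_le ?_ (hf.isBoundedUnder_le_slope x v)
  refine Frequently.filter_mono ?_ (prod_mono (pure_le_nhds x) le_rfl)
  refine Eventually.frequently ?_
  filter_upwards [prod_mem_prod (mem_pure.2 (mem_singleton x)) self_mem_nhdsWithin]
    with p ⟨hx, ht⟩
  rw [mem_singleton_iff.1 hx]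
  exact h p.2 ht

theorem LocallyLipschitz.neg_mul_norm_le_clarkeDeriv (hf : LocallyLipschitz f) {g : X} {c : ℝ}
    (hg : ∀ x, f g ≤ f x + c * dist x g) (v : X) : -(c * ‖v‖) ≤ clarkeDeriv f g v := by
  refine hf.le_clarkeDeriv fun t ht => ?_
  have := hg (g + t • v)
  rw [dist_eq_norm, add_sub_cancel_left, norm_smul, Real.norm_of_nonneg ht.le] at this
  rw [le_div_iff₀ ht]
  linarith

end Clarke

theorem exists_le_iInf_add_and_clarkeDeriv_ge {X : Type*} [NormedAddCommGroup X]
    [NormedSpace ℝ X] [CompleteSpace X] {f : X → ℝ} (hlip : LocallyLipschitz f)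
    (hlsc : LowerSemicontinuous f) (hbdd : BddBelow (range f)) {η δ : ℝ} (hη : 0 < η)
    (hδ : 0 < δ) :
    ∃ g, f g ≤ (⨅ y, f y) + δ ∧ ∀ v, -η * ‖v‖ * (1 + ‖g‖)⁻¹ ≤ clarkeDeriv f g v := by
  obtain ⟨x₀, hx₀⟩ : ∃ x₀, f x₀ < (⨅ y, f y) + min δ (η / 2) :=
    exists_lt_of_ciInf_lt (lt_add_of_pos_right _ (by positivity))
  set M := 1 + ‖x₀‖
  set c := η / (2 * M)
  have hM : 0 < M := by positivity
  have hc : 0 < c := by positivity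
  obtain ⟨g, hg₀, hg⟩ := hlsc.exists_mem_ekelandSet_forall_le_add_mul_dist hbdd hc x₀
  rw [mem_ekelandSet] at hg₀
  have hdist_nonneg : 0 ≤ c * dist g x₀ := mul_nonneg hc.le dist_nonneg
  have hinf : (⨅ y, f y) ≤ f g := ciInf_le hbdd g
  have hdist : dist g x₀ ≤ M := by
    have hcM : c * M = η / 2 := by
      rw [div_mul_eq_mul_div, mul_div_mul_right _ _ hM.ne']
    have : c * dist g x₀ ≤ c * M := by linarith [min_le_right δ (η / 2)]
    exact le_of_mul_le_mul_left this hc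
  have hnorm : 1 + ‖g‖ ≤ 2 * M := by
    linarith [norm_le_norm_add_norm_sub' g x₀, dist_eq_norm g x₀]
  refine ⟨g, by linarith [min_le_left δ (η / 2)], fun v => ?_⟩
  calc -η * ‖v‖ * (1 + ‖g‖)⁻¹ = -(η / (1 + ‖g‖) * ‖v‖) := by ring
    _ ≤ -(c * ‖v‖) := by
      gcongr
      exact div_le_div_of_nonneg_left hη.le (by positivity) hnorm
    _ ≤ clarkeDeriv f g v := hlip.neg_mul_norm_le_clarkeDeriv hg v

theorem cerami_minimizing_sequence_locallyLipschitz_general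
    {X : Type*} [NormedAddCommGroup X] [NormedSpace ℝ X] [CompleteSpace X]
    (f : X → ℝ) (hlip : LocallyLipschitz f)
    (hlsc : LowerSemicontinuous f) (hbdd : BddBelow (Set.range f))
    (ε : ℕ → ℝ) (hεpos : ∀ n, 0 < ε n) :
    ∃ g : ℕ → X,
      Tendsto (fun n => f (g n)) atTop (nhds (⨅ y, f y)) ∧
      ∀ n, ∀ h : X, clarkeDeriv f (g n) h ≥ -(ε n) * ‖h‖ * (1 + ‖g n‖)⁻¹ := by
  choose g hg_le hg_clarke using fun n : ℕ =>
    exists_le_iInf_add_and_clarkeDeriv_ge hlip hlsc hbdd (hεpos n) Nat.one_div_pos_of_nat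
  refine ⟨g, ?_, fun n => hg_clarke n⟩
  have hupper : Tendsto (fun n : ℕ => (⨅ y, f y) + 1 / (n + 1)) atTop (𝓝 (⨅ y, f y)) := by
    simpa using tendsto_one_div_add_atTop_nhds_zero_nat.const_add (⨅ y, f y)
  exact tendsto_of_tendsto_of_tendsto_of_le_of_le tendsto_const_nhds hupper
    (fun n => ciInf_le hbdd (g n)) hg_le

/-- Cerami-type minimizing sequences for locally Lipschitz, lower semicontinuous,
bounded below functionals, in terms of the Clarke directional derivative. -/
theorem cerami_minimizing_sequence_locallyLipschitz
    {X : Type*} [NormedAddCommGroup X] [NormedSpace ℝ X] [CompleteSpace X]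
    (f : X → ℝ) (hlip : LocallyLipschitz f)
    (hlsc : LowerSemicontinuous f) (hbdd : BddBelow (Set.range f))
    (ε : ℕ → ℝ) (hεpos : ∀ n, 0 < ε n) (hεanti : StrictAnti ε)
    (hεto : Tendsto ε atTop (nhds 0)) :
    ∃ g : ℕ → X,
      Tendsto (fun n => f (g n)) atTop (nhds (⨅ y, f y)) ∧
      ∀ n, ∀ h : X, clarkeDeriv f (g n) h ≥ -(ε n) * ‖h‖ * (1 + ‖g n‖)⁻¹ :=
  cerami_minimizing_sequence_locallyLipschitz_general f hlip hlsc hbdd ε hεpos
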